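/- Under the setup of the direct coupled observer (A_p = 0, R_o > 0 symmetric 2×2, R_c = C_p^T β with β nonzero, C_o R_o^{-1} β^T = -1), the solutions of the augmented linear system ẋ_p = 2J C_p^T β x_o, ẋ_o = 2J(β^T C_p x_p + R_o x_o) satisfy lim_{T→∞} (1/T) ∫₀^T (C_p x_p(0) - C_o x_o(t)) dt = 0. -/

import Mathlib

/-!
The plant output `C_p x_p` is conserved, because `C_p J C_pᵀ` is a skew-symmetric `1 × 1` matrix,
hence zero. The shifted observer state `y = x_o + R_o⁻¹ βᵀ C_p x_p(0)` then solves `y' = 2 J R_o y`,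
a Hamiltonian flow that conserves the energy `yᵀ R_o y`; as `R_o > 0`, `y` stays bounded. The
normalization `C_o R_o⁻¹ βᵀ = -1` turns the estimation error into `-C_o y`, and since `2 J R_o` is
invertible, `C_o y` is the derivative of the bounded function `C_o (2 J R_o)⁻¹ y`. A derivative of
a bounded function has vanishing time averages.
-/

open Matrix Filter

section

variable {m n : Type*} [Fintype n]

theorem HasDerivAt.matrix_mulVec (M : Matrix m n ℝ) {f : ℝ → n → ℝ} {f' : n → ℝ} {t : ℝ}
    (hf : HasDerivAt f f' t) : HasDerivAt (fun s => M *ᵥ f s) (M *ᵥ f') t := by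
  rw [hasDerivAt_pi] at hf ⊢
  intro i
  simpa [mulVec, _root_.dotProduct] using HasDerivAt.fun_sum fun j _ => (hf j).const_mul (M i j)

theorem HasDerivAt.dotProduct {f g : ℝ → n → ℝ} {f' g' : n → ℝ} {t : ℝ}
    (hf : HasDerivAt f f' t) (hg : HasDerivAt g g' t) :
    HasDerivAt (fun s => f s ⬝ᵥ g s) (f' ⬝ᵥ g t + f t ⬝ᵥ g') t := by
  rw [hasDerivAt_pi] at hf hg
  simp only [_root_.dotProduct]
  rw [← Finset.sum_add_distrib]
  exact HasDerivAt.fun_sum fun j _ => (hf j).mul (hg j)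

theorem eq_of_forall_hasDerivAt_zero {E : Type*} [NormedAddCommGroup E] [NormedSpace ℝ E]
    {f : ℝ → E} (hf : ∀ t, HasDerivAt f 0 t) (t : ℝ) : f t = f 0 :=
  is_const_of_deriv_eq_zero (fun s => (hf s).differentiableAt) (fun s => (hf s).deriv) t 0

theorem dotProduct_mulVec_self_eq_zero {S : Matrix n n ℝ} (hS : Sᵀ = -S) (w : n → ℝ) :
    w ⬝ᵥ S *ᵥ w = 0 := by
  have h : w ⬝ᵥ S *ᵥ w = -(w ⬝ᵥ S *ᵥ w) := by
    conv_lhs => rw [dotProduct_mulVec, ← mulVec_transpose, hS, neg_mulVec, neg_dotProduct,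
      dotProduct_comm]
  linarith

theorem mul_mul_transpose_eq_zero [Unique m] (C : Matrix m n ℝ) {S : Matrix n n ℝ}
    (hS : Sᵀ = -S) : C * S * Cᵀ = 0 := by
  have h : (C * S * Cᵀ)ᵀ = -(C * S * Cᵀ) := by
    rw [transpose_mul, transpose_mul, transpose_transpose, hS]
    simp [Matrix.mul_assoc]
  ext i j
  rw [Subsingleton.elim j i]
  have hii := congrFun (congrFun h i) i
  simp only [transpose_apply, Matrix.neg_apply] at hii
  rw [Matrix.zero_apply]
  linarith

theorem mulVec_eq_of_hasDerivAt_skew_mul_transpose_mul {k : Type*} [Fintype k] [Fintype m]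
    [Unique m]
    {C : Matrix m n ℝ} {S : Matrix n n ℝ} (hS : Sᵀ = -S) (K : Matrix m k ℝ) {x : ℝ → n → ℝ}
    {u : ℝ → k → ℝ} (hx : ∀ t, HasDerivAt x ((S * (Cᵀ * K)) *ᵥ u t) t) (t : ℝ) :
    C *ᵥ x t = C *ᵥ x 0 :=
  eq_of_forall_hasDerivAt_zero (fun t => by
    simpa [mulVec_mulVec, ← Matrix.mul_assoc, mul_mul_transpose_eq_zero C hS] using
      (hx t).matrix_mulVec C) t

theorem dotProduct_mulVec_self_eq_of_hasDerivAt {Q S : Matrix n n ℝ} (hQ : Q.IsSymm) (hS : Sᵀ = -S)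
    {y : ℝ → n → ℝ} (hy : ∀ t, HasDerivAt y ((S * Q) *ᵥ y t) t) (t : ℝ) :
    y t ⬝ᵥ Q *ᵥ y t = y 0 ⬝ᵥ Q *ᵥ y 0 := by
  refine eq_of_forall_hasDerivAt_zero (f := fun s => y s ⬝ᵥ Q *ᵥ y s) (fun t => ?_) t
  refine ((hy t).dotProduct ((hy t).matrix_mulVec Q)).congr_deriv ?_
  rw [← mulVec_mulVec, dotProduct_mulVec (y t) Q, ← mulVec_transpose, hQ.eq, dotProduct_comm,
    dotProduct_mulVec_self_eq_zero hS, zero_add]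

theorem Matrix.PosDef.exists_pos_mul_norm_sq_le {Q : Matrix n n ℝ} (hQ : Q.PosDef) :
    ∃ c > 0, ∀ v : n → ℝ, c * ‖v‖ ^ 2 ≤ v ⬝ᵥ Q *ᵥ v := by
  rcases isEmpty_or_nonempty n with _ | _
  · exact ⟨1, one_pos, fun v => by simp [Subsingleton.elim v 0]⟩
  obtain ⟨u, hu, hmin⟩ := (isCompact_sphere (0 : n → ℝ) 1).exists_isMinOn
    (NormedSpace.sphere_nonempty.2 zero_le_one)
    (by fun_prop : Continuous fun v : n → ℝ => v ⬝ᵥ Q *ᵥ v).continuousOn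
  refine ⟨u ⬝ᵥ Q *ᵥ u, hQ.dotProduct_mulVec_pos (ne_zero_of_mem_unit_sphere ⟨u, hu⟩), fun v => ?_⟩
  rcases eq_or_ne v 0 with rfl | hv
  · simp
  have hv' : 0 < ‖v‖ := norm_pos_iff.2 hv
  have hle : _ ≤ _ := Set.mem_ofPred.1 <|
    hmin (show ‖v‖⁻¹ • v ∈ Metric.sphere 0 1 by simp [norm_smul, hv'.ne'])
  simp only [mulVec_smul, dotProduct_smul, smul_dotProduct, smul_eq_mul] at hle
  calc _ ≤ ‖v‖⁻¹ * (‖v‖⁻¹ * (v ⬝ᵥ Q *ᵥ v)) * ‖v‖ ^ 2 := by gcongr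
    _ = _ := by field_simp

theorem exists_norm_le_of_hasDerivAt_mul_posDef {Q S : Matrix n n ℝ} (hQ : Q.PosDef)
    (hS : Sᵀ = -S) {y : ℝ → n → ℝ} (hy : ∀ t, HasDerivAt y ((S * Q) *ᵥ y t) t) :
    ∃ B, ∀ t, ‖y t‖ ≤ B := by
  obtain ⟨c, hc, hcQ⟩ := hQ.exists_pos_mul_norm_sq_le
  refine ⟨√((y 0 ⬝ᵥ Q *ᵥ y 0) / c), fun t => Real.le_sqrt_of_sq_le ?_⟩
  rw [le_div_iff₀' hc,
    ← dotProduct_mulVec_self_eq_of_hasDerivAt (isHermitian_iff_isSymm.1 hQ.1) hS hy t]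
  exact hcQ (y t)

end

theorem tendsto_inv_mul_integral_of_hasDerivAt_of_abs_le {F f : ℝ → ℝ} {M : ℝ}
    (hF : ∀ t, HasDerivAt F (f t) t) (hf : Continuous f) (hFM : ∀ t, |F t| ≤ M) :
    Tendsto (fun T => (1 / T) * ∫ t in (0 : ℝ)..T, f t) atTop (nhds 0) := by
  simp only [intervalIntegral.integral_eq_sub_of_hasDerivAt (fun t _ => hF t)
    (hf.intervalIntegrable _ _), one_div]
  refine tendsto_inv_atTop_zero.zero_mul_isBoundedUnder_le (isBoundedUnder_of ⟨2 * M, fun T => ?_⟩)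
  simp only [Function.comp_apply, Real.norm_eq_abs]
  linarith [abs_sub (F T) (F 0), hFM T, hFM 0]

theorem tendsto_inv_mul_integral_mulVec_of_hasDerivAt {m n : Type*} [Fintype m] [Fintype n]
    [DecidableEq n] {A : Matrix n n ℝ} (hA : IsUnit A.det) (C : Matrix m n ℝ) {y : ℝ → n → ℝ}
    (hy : ∀ t, HasDerivAt y (A *ᵥ y t) t) {B : ℝ} (hB : ∀ t, ‖y t‖ ≤ B) (i : m) :
    Tendsto (fun T => (1 / T) * ∫ t in (0 : ℝ)..T, (C *ᵥ y t) i) atTop (nhds 0) := by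
  set L := C * A⁻¹
  have hL : L * A = C := by rw [Matrix.mul_assoc, nonsing_inv_mul _ hA, Matrix.mul_one]
  refine tendsto_inv_mul_integral_of_hasDerivAt_of_abs_le (F := fun t => (L *ᵥ y t) i)
    (M := ‖(mulVecLin L).toContinuousLinearMap‖ * B) (fun t => ?_) ?_ (fun t => ?_)
  · simpa [mulVec_mulVec, hL] using hasDerivAt_pi.1 ((hy t).matrix_mulVec L) i
  · have hyc : Continuous y := continuous_iff_continuousAt.2 fun t => (hy t).continuousAt
    fun_prop
  · calc |(L *ᵥ y t) i| ≤ ‖L *ᵥ y t‖ := norm_le_pi_norm (L *ᵥ y t) i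
      _ ≤ ‖(mulVecLin L).toContinuousLinearMap‖ * ‖y t‖ :=
        (mulVecLin L).toContinuousLinearMap.le_opNorm (y t)
      _ ≤ _ := by gcongr; exact hB t

theorem stmt_13_general (Ro : Matrix (Fin 2) (Fin 2) ℝ) (hpos : Ro.PosDef)
    (Cp β Co : Matrix (Fin 1) (Fin 2) ℝ)
    (hCo : Co * Ro⁻¹ * βᵀ = -1)
    (J : Matrix (Fin 2) (Fin 2) ℝ) (hJ : J = !![0, 1; -1, 0])
    (xp xo : ℝ → Fin 2 → ℝ)
    (hxp : ∀ t, HasDerivAt xp (((2 : ℝ) • (J * (Cpᵀ * β))).mulVec (xo t)) t)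
    (hxo : ∀ t, HasDerivAt xo
      (((2 : ℝ) • J).mulVec ((βᵀ * Cp).mulVec (xp t) + Ro.mulVec (xo t))) t) :
    Tendsto (fun T : ℝ =>
        (1 / T) * ∫ t in (0 : ℝ)..T, (Cp.mulVec (xp 0) 0 - Co.mulVec (xo t) 0))
      atTop (nhds 0) := by
  subst hJ
  set S : Matrix (Fin 2) (Fin 2) ℝ := (2 : ℝ) • !![0, 1; -1, 0]
  have hS : Sᵀ = -S := by
    ext i j; fin_cases i <;> fin_cases j <;> simp [S]
  have hzp : ∀ t, Cp *ᵥ xp t = Cp *ᵥ xp 0 :=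
    mulVec_eq_of_hasDerivAt_skew_mul_transpose_mul hS β (u := xo) fun t =>
      (hxp t).congr_deriv (by rw [smul_mul_assoc])
  have hRo : IsUnit Ro.det := (isUnit_iff_isUnit_det Ro).1 hpos.isUnit
  set c := (Ro⁻¹ * βᵀ * Cp) *ᵥ xp 0
  set y : ℝ → Fin 2 → ℝ := fun t => xo t + c
  have hy : ∀ t, HasDerivAt y ((S * Ro) *ᵥ y t) t := fun t => by
    have hRc : Ro *ᵥ c = (βᵀ * Cp) *ᵥ xp t := by
      rw [mulVec_mulVec, ← Matrix.mul_assoc, ← Matrix.mul_assoc, mul_nonsing_inv _ hRo,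
        Matrix.one_mul, ← mulVec_mulVec, ← mulVec_mulVec, hzp t]
    refine (hxo t).add_const c |>.congr_deriv ?_
    rw [← mulVec_mulVec _ S Ro, mulVec_add Ro, hRc, add_comm (Ro *ᵥ xo t)]
  have herr : ∀ t, (Cp *ᵥ xp 0) 0 - (Co *ᵥ xo t) 0 = ((-Co) *ᵥ y t) 0 := fun t => by
    have hCoc : Co *ᵥ c = -(Cp *ᵥ xp 0) := by
      rw [mulVec_mulVec, ← Matrix.mul_assoc, ← Matrix.mul_assoc, hCo, Matrix.neg_mul,
        Matrix.one_mul, neg_mulVec]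
    simp only [y, neg_mulVec, mulVec_add, hCoc, Pi.add_apply, Pi.neg_apply]
    ring
  have hA : IsUnit (S * Ro).det := by
    rw [det_mul]
    exact IsUnit.mul (by simp [S, det_fin_two]) hRo
  obtain ⟨B, hB⟩ := exists_norm_le_of_hasDerivAt_mul_posDef hpos hS hy
  simpa only [herr] using tendsto_inv_mul_integral_mulVec_of_hasDerivAt hA (-Co) hy hB 0

theorem stmt_13 (Ro : Matrix (Fin 2) (Fin 2) ℝ) (hsym : Ro.IsSymm) (hpos : Ro.PosDef)
    (Cp β Co : Matrix (Fin 1) (Fin 2) ℝ) (hβ : β ≠ 0)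
    (hCo : Co * Ro⁻¹ * βᵀ = -1)
    (J : Matrix (Fin 2) (Fin 2) ℝ) (hJ : J = !![0, 1; -1, 0])
    (xp xo : ℝ → Fin 2 → ℝ)
    (hxp : ∀ t, HasDerivAt xp (((2 : ℝ) • (J * (Cpᵀ * β))).mulVec (xo t)) t)
    (hxo : ∀ t, HasDerivAt xo
      (((2 : ℝ) • J).mulVec ((βᵀ * Cp).mulVec (xp t) + Ro.mulVec (xo t))) t) :
    Tendsto (fun T : ℝ =>
        (1 / T) * ∫ t in (0 : ℝ)..T, (Cp.mulVec (xp 0) 0 - Co.mulVec (xo t) 0))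
      atTop (nhds 0) :=
  stmt_13_general Ro hpos Cp β Co hCo J hJ xp xo hxp hxo
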